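/- arXiv:1703.04829 — 3 statements merged into one kernel-verified Lean document; each statement's English description precedes it below -/
import Mathlib

section
/- Let X = [x_1 … x_N] ∈ ℝ^{n×N} have nonzero columns and let α ∈ (0,1] satisfy α ≤ σ(X). Then v_α(X) ≤ ρ_α(X). -/
/-!
Fix `η ≠ 0` and let `t₀` maximise `|x̃_tᵀη|/‖η‖₂`; the maximum `c` is at least `σ(X) ≥ α`.
A column `x̃_k` with `k ∈ J_{t₀,α}(X)` makes an angle at most `arcsin δ` with the line of `x̃_{t₀}`,
so by the triangle inequality for angles `|x̃_kᵀη|/‖η‖₂ ≥ cos (arcsin δ + arccos c)`, and `δ` is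
chosen so that this is at least `α`. Hence `J_{t₀,α}(X) ⊆ 𝓘_α(X,η)`, and taking the infimum over `η`
gives the claim.
-/

open scoped BigOperators

noncomputable section

/-- Euclidean dot product on `ℝⁿ`. -/
def dotR {n : ℕ} (u v : Fin n → ℝ) : ℝ := ∑ i, u i * v i

/-- Euclidean 2-norm on `ℝⁿ`. -/
def nrm {n : ℕ} (v : Fin n → ℝ) : ℝ := Real.sqrt (∑ i, v i ^ 2)

/-- Normalized columns: `x̃_t = x_t / ‖x_t‖₂`. -/
def ntild {n N : ℕ} (x : Fin N → Fin n → ℝ) (t : Fin N) : Fin n → ℝ :=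
  (nrm (x t))⁻¹ • x t

/-- The index set `𝓘_α(X,η) = {t : |x_tᵀη| ≥ α‖x_t‖₂‖η‖₂}`. -/
def Iset {n N : ℕ} (x : Fin N → Fin n → ℝ) (a : ℝ) (η : Fin n → ℝ) : Finset (Fin N) :=
  Finset.univ.filter fun t => a * nrm (x t) * nrm η ≤ |dotR (x t) η|

/-- The correlation measure `ρ_α(X) = (1/N)·inf_{η ≠ 0} |𝓘_α(X,η)|`. -/
def rhoX {n N : ℕ} (x : Fin N → Fin n → ℝ) (a : ℝ) : ℝ :=
  (1 / N) * sInf ((fun η : Fin n → ℝ => ((Iset x a η).card : ℝ)) '' {η | η ≠ 0})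

/-- `σ(X) = min {‖X̃ᵀη‖_∞ : ‖η‖₂ = 1}` where `‖X̃ᵀη‖_∞ = max_t |x̃_tᵀη|`. -/
def sigmaX {n N : ℕ} (x : Fin N → Fin n → ℝ) : ℝ :=
  sInf ((fun η : Fin n → ℝ => ⨆ t : Fin N, |dotR (ntild x t) η|) '' {η | nrm η = 1})

/-- `δ = √(1−α²) − √(1−σ(X)²)`. -/
def deltaX {n N : ℕ} (x : Fin N → Fin n → ℝ) (a : ℝ) : ℝ :=
  Real.sqrt (1 - a ^ 2) - Real.sqrt (1 - sigmaX x ^ 2)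

/-- `J_{t,α}(X) = {k : |x̃_kᵀx̃_t| ≥ √(1−δ²)}`. -/
def Jset {n N : ℕ} (x : Fin N → Fin n → ℝ) (a : ℝ) (t : Fin N) : Finset (Fin N) :=
  Finset.univ.filter fun k =>
    Real.sqrt (1 - deltaX x a ^ 2) ≤ |dotR (ntild x k) (ntild x t)|

/-- `v_α(X) = (1/N)·min_t |J_{t,α}(X)|`. -/
def vX {n N : ℕ} (x : Fin N → Fin n → ℝ) (a : ℝ) : ℝ :=
  (1 / N) * ⨅ t : Fin N, ((Jset x a t).card : ℝ)

open Real
open scoped RealInnerProductSpace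

section Scalar

variable {a s c d p : ℝ}

-- `sin A - sin S ≤ sin (A - S)` for `0 ≤ S ≤ A ≤ π/2`, written with `a = cos A`, `s = cos S`
theorem sqrt_one_sub_sq_sub_sqrt_le (ha : 0 ≤ a) (has : a ≤ s) (hs : s ≤ 1) :
    √(1 - a ^ 2) - √(1 - s ^ 2) ≤ √(1 - a ^ 2) * s - a * √(1 - s ^ 2) := by
  have hA := sq_sqrt (show 0 ≤ 1 - a ^ 2 by nlinarith)
  have hS := sq_sqrt (show 0 ≤ 1 - s ^ 2 by nlinarith)
  have key : √(1 - a ^ 2) * (1 - s) ≤ √(1 - s ^ 2) * (1 - a) := by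
    refine (pow_le_pow_iff_left₀ (by bound) (by bound) two_ne_zero).1 ?_
    rw [mul_pow, mul_pow, hA, hS]
    nlinarith [mul_nonneg (mul_nonneg (sub_nonneg.2 (has.trans hs)) (sub_nonneg.2 hs))
      (sub_nonneg.2 has)]
  linarith

theorem le_sqrt_one_sub_sq_mul_sub (ha : 0 ≤ a) (has : a ≤ s) (hsc : s ≤ c) (hc : c ≤ 1) :
    a ≤ √(1 - (√(1 - a ^ 2) - √(1 - s ^ 2)) ^ 2) * c
      - (√(1 - a ^ 2) - √(1 - s ^ 2)) * √(1 - c ^ 2) := by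
  have hs := hsc.trans hc
  have hA := sq_sqrt (show 0 ≤ 1 - a ^ 2 by nlinarith)
  have hS := sq_sqrt (show 0 ≤ 1 - s ^ 2 by nlinarith)
  set A := √(1 - a ^ 2)
  set S := √(1 - s ^ 2)
  have hSA : S ≤ A := sqrt_le_sqrt (by nlinarith)
  have hCS : √(1 - c ^ 2) ≤ S := sqrt_le_sqrt (by nlinarith)
  have hδ : A - S ≤ A * s - a * S := sqrt_one_sub_sq_sub_sqrt_le ha has hs
  -- `a s + A S` and `A s - a S` are the cosine and sine of the angle `arccos a - arccos s`
  have hcos : a * s + A * S ≤ √(1 - (A - S) ^ 2) := by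
    refine le_sqrt_of_sq_le ?_
    nlinarith [pow_le_pow_left₀ (sub_nonneg.2 hSA) hδ 2]
  have hsin : 0 ≤ A * s - a * S := by nlinarith [sqrt_nonneg (1 - s ^ 2)]
  calc a = (a * s + A * S) * s - (A * s - a * S) * S := by linear_combination (-a) * hS
    _ ≤ (a * s + A * S) * c - (A * s - a * S) * √(1 - c ^ 2) := by
        have := ha.trans has
        have : 0 ≤ a * s + A * S := by positivity
        gcongr
    _ ≤ √(1 - (A - S) ^ 2) * c - (A - S) * √(1 - c ^ 2) := by
        gcongr
        linarith

theorem sqrt_one_sub_sq_mul_sub_le (hc : 0 ≤ c) (hd : 0 ≤ d) (hdp : √(1 - d ^ 2) ≤ p) :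
    √(1 - d ^ 2) * c - d * √(1 - c ^ 2) ≤ p * c - √(1 - p ^ 2) * √(1 - c ^ 2) := by
  have hpd : √(1 - p ^ 2) ≤ d := sqrt_le_iff.2 ⟨hd, by linarith [(sqrt_le_iff.1 hdp).2]⟩
  gcongr

end Scalar

section InnerProductSpace

variable {F : Type*} [NormedAddCommGroup F] [InnerProductSpace ℝ F]

theorem abs_inner_mul_abs_inner_sub_le {u v w : F} (hu : ‖u‖ = 1) (hv : ‖v‖ = 1) (hw : ‖w‖ = 1) :
    |⟪u, v⟫| * |⟪v, w⟫| - √(1 - ⟪u, v⟫ ^ 2) * √(1 - ⟪v, w⟫ ^ 2) ≤ |⟪u, w⟫| := by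
  -- Cauchy–Schwarz for the components of `u` and `w` orthogonal to `v`
  have hCS := abs_real_inner_le_norm (u - ⟪u, v⟫ • v) (w - ⟪v, w⟫ • v)
  have hself {y : F} (hy : ‖y‖ = 1) : ⟪y, y⟫ = 1 := by rw [real_inner_self_eq_norm_sq, hy, one_pow]
  have hinner : ⟪u - ⟪u, v⟫ • v, w - ⟪v, w⟫ • v⟫ = ⟪u, w⟫ - ⟪u, v⟫ * ⟪v, w⟫ := by
    simp only [inner_sub_left, inner_sub_right, real_inner_smul_left, real_inner_smul_right, hself hv]
    ring
  have hnorm {y : F} (hy : ‖y‖ = 1) (r : ℝ) (hr : ⟪y, v⟫ = r) : ‖y - r • v‖ = √(1 - r ^ 2) := by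
    rw [norm_eq_sqrt_real_inner]
    congr 1
    simp only [inner_sub_left, inner_sub_right, real_inner_smul_left, real_inner_smul_right,
      hself hv, hself hy, real_inner_comm y v, hr]
    ring
  rw [hinner, hnorm hu _ rfl, hnorm hw _ (real_inner_comm _ _)] at hCS
  rw [← abs_mul]
  linarith [abs_sub_abs_le_abs_sub (⟪u, v⟫ * ⟪v, w⟫) ⟪u, w⟫, abs_sub_comm ⟪u, w⟫ (⟪u, v⟫ * ⟪v, w⟫)]

theorem mul_norm_mul_norm_le_abs_inner {a : ℝ} {u w : F} (hu : u ≠ 0) (hw : w ≠ 0)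
    (h : a ≤ |⟪‖u‖⁻¹ • u, ‖w‖⁻¹ • w⟫|) : a * ‖u‖ * ‖w‖ ≤ |⟪u, w⟫| := by
  rw [real_inner_smul_left, real_inner_smul_right, abs_mul, abs_mul, abs_inv, abs_inv, abs_norm,
    abs_norm, ← mul_assoc, ← mul_inv, inv_mul_eq_div, le_div_iff₀ (by positivity)] at h
  linarith

end InnerProductSpace

section Euclidean

variable {n N : ℕ}

theorem dotR_eq_inner (u v : Fin n → ℝ) :
    dotR u v = ⟪(WithLp.toLp 2 u : EuclideanSpace ℝ (Fin n)), WithLp.toLp 2 v⟫ := by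
  simp [dotR, PiLp.inner_apply, mul_comm]

theorem nrm_eq_norm (v : Fin n → ℝ) : nrm v = ‖(WithLp.toLp 2 v : EuclideanSpace ℝ (Fin n))‖ := by
  simp [nrm, EuclideanSpace.norm_eq]

theorem nrm_inv_smul_self {v : Fin n → ℝ} (hv : v ≠ 0) : nrm ((nrm v)⁻¹ • v) = 1 := by
  rw [nrm_eq_norm, nrm_eq_norm, WithLp.toLp_smul]
  exact norm_smul_inv_norm (by simpa using hv)

theorem abs_dotR_le_one {u v : Fin n → ℝ} (hu : nrm u = 1) (hv : nrm v = 1) : |dotR u v| ≤ 1 := by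
  rw [nrm_eq_norm] at hu hv
  simpa [dotR_eq_inner, hu, hv] using abs_real_inner_le_norm (WithLp.toLp 2 u) (WithLp.toLp 2 v)

theorem mem_Iset_of_le_abs_dotR {x : Fin N → Fin n → ℝ} {a : ℝ} {η : Fin n → ℝ} {k : Fin N}
    (hk : x k ≠ 0) (hη : η ≠ 0) (h : a ≤ |dotR (ntild x k) ((nrm η)⁻¹ • η)|) :
    k ∈ Iset x a η := by
  simp only [ntild, dotR_eq_inner, nrm_eq_norm, WithLp.toLp_smul] at h
  simpa [Iset, dotR_eq_inner, nrm_eq_norm] using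
    mul_norm_mul_norm_le_abs_inner (by simpa using hk) (by simpa using hη) h

theorem sigmaX_le_iSup_abs_dotR (x : Fin N → Fin n → ℝ) {η : Fin n → ℝ} (hη : nrm η = 1) :
    sigmaX x ≤ ⨆ t, |dotR (ntild x t) η| :=
  csInf_le ⟨0, by rintro _ ⟨θ, -, rfl⟩; exact Real.iSup_nonneg fun _ => abs_nonneg _⟩ ⟨η, hη, rfl⟩

theorem deltaX_nonneg {x : Fin N → Fin n → ℝ} {a : ℝ} (ha : 0 ≤ a) (haσ : a ≤ sigmaX x) :
    0 ≤ deltaX x a :=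
  sub_nonneg.2 (sqrt_le_sqrt (by nlinarith))

end Euclidean

theorem exists_Jset_subset_Iset {n N : ℕ} [Nonempty (Fin N)] {x : Fin N → Fin n → ℝ}
    (hx : ∀ t, x t ≠ 0) {a : ℝ} (ha : 0 ≤ a) (haσ : a ≤ sigmaX x) {η : Fin n → ℝ} (hη : η ≠ 0) :
    ∃ t, Jset x a t ⊆ Iset x a η := by
  set η' := (nrm η)⁻¹ • η
  have hη' : nrm η' = 1 := nrm_inv_smul_self hη
  have hx' (t : Fin N) : nrm (ntild x t) = 1 := nrm_inv_smul_self (hx t)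
  obtain ⟨t₀, ht₀⟩ := exists_eq_ciSup_of_finite (f := fun t => |dotR (ntild x t) η'|)
  refine ⟨t₀, fun k hk => mem_Iset_of_le_abs_dotR (hx k) hη ?_⟩
  have hσc : sigmaX x ≤ |dotR (ntild x t₀) η'| := ht₀ ▸ sigmaX_le_iSup_abs_dotR x hη'
  calc a ≤ √(1 - deltaX x a ^ 2) * |dotR (ntild x t₀) η'|
        - deltaX x a * √(1 - |dotR (ntild x t₀) η'| ^ 2) :=
        le_sqrt_one_sub_sq_mul_sub ha haσ hσc (abs_dotR_le_one (hx' t₀) hη')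
    _ ≤ |dotR (ntild x k) (ntild x t₀)| * |dotR (ntild x t₀) η'|
        - √(1 - |dotR (ntild x k) (ntild x t₀)| ^ 2) * √(1 - |dotR (ntild x t₀) η'| ^ 2) :=
        sqrt_one_sub_sq_mul_sub_le (abs_nonneg _) (deltaX_nonneg ha haσ) (Finset.mem_filter.1 hk).2
    _ ≤ |dotR (ntild x k) η'| := by
        simp only [dotR_eq_inner, sq_abs]
        simp only [nrm_eq_norm] at hx' hη'
        exact abs_inner_mul_abs_inner_sub_le (hx' k) (hx' t₀) hη'

theorem vX_le_rhoX_general {n N : ℕ} (hN : 0 < N)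
    (x : Fin N → Fin n → ℝ) (hx : ∀ t, x t ≠ 0)
    (a : ℝ) (ha : 0 < a) (haσ : a ≤ sigmaX x) :
    vX x a ≤ rhoX x a := by
  have : Nonempty (Fin N) := ⟨⟨0, hN⟩⟩
  refine mul_le_mul_of_nonneg_left ?_ (by positivity)
  refine le_csInf ⟨_, x ⟨0, hN⟩, hx _, rfl⟩ ?_
  rintro _ ⟨η, hη, rfl⟩
  obtain ⟨t, ht⟩ := exists_Jset_subset_Iset hx ha.le haσ hη
  exact (ciInf_le (Set.finite_range _).bddBelow t).trans (Nat.cast_le.2 (Finset.card_le_card ht))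

/-- if `0 < α ≤ 1` and `α ≤ σ(X)`, then `v_α(X) ≤ ρ_α(X)`. -/
theorem vX_le_rhoX {n N : ℕ} (hN : 0 < N)
    (x : Fin N → Fin n → ℝ) (hx : ∀ t, x t ≠ 0)
    (a : ℝ) (ha : 0 < a) (ha1 : a ≤ 1) (haσ : a ≤ sigmaX x) :
    vX x a ≤ rhoX x a :=
  vX_le_rhoX_general hN x hx a ha haσ
end
end

section
/- Let x_1,…,x_N ∈ ℝⁿ be nonzero vectors, r_x = min_t ‖x_t‖₂, and let y_t = x_tᵀθ° + v_t for t = 1,…,N. Let ε ≥ 0, I_ε^0 = {t : |v_t| ≤ ε}, and let ℓ : ℝ → [0,∞) satisfy properties P1–P4 with constant α_ℓ > 0. Let γ > 0, α ∈ (0,1], and let θ* be any maximizer over ℝⁿ of θ ↦ ∑_{k=1}^N exp(−γℓ(y_k − x_kᵀθ)). Set η* = θ* − θ°. Then e^{−γℓ(ε)}·(|I_ε^0|·e^{−γℓ(ε)} + |I_ε^0| − N) − |I_ε^0| ≤ |I_ε^0 ∩ 𝓘_α(X, η*)|·(exp(−γ·α_ℓ·ℓ(α·r_x·‖η*‖₂))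 − 1). -/
/-!
At the true parameter `θ°` every inlier `t ∈ I_ε^0` contributes at least `e^{-γℓ(ε)}` to the
objective, so the maximal value is at least `|I_ε^0| e^{-γℓ(ε)}`. At the maximizer `θ*`, property
P4 turns the residual `v_t - x_tᵀη*` of an inlier `t ∈ 𝓘_α(X, η*)` into a loss of at least
`α_ℓ ℓ(α r_x ‖η*‖₂) - ℓ(ε)`, so its term is at most `e^{γℓ(ε)} e^{-γα_ℓ ℓ(α r_x ‖η*‖₂)}`, while
every other term is at most `1`. Comparing the two bounds and rearranging gives the inequality.
-/

noncomputable section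

open Finset

theorem dotR_sub_right {n : ℕ} (u v w : Fin n → ℝ) : dotR u (v - w) = dotR u v - dotR u w := by
  simp only [dotR, Pi.sub_apply, mul_sub, sum_sub_distrib]

theorem nrm_nonneg {n : ℕ} (v : Fin n → ℝ) : 0 ≤ nrm v := Real.sqrt_nonneg _

theorem abs_mul_iInf_nrm_mul_le_of_mem_Iset {n N : ℕ} {x : Fin N → Fin n → ℝ} {a : ℝ}
    (ha : 0 ≤ a) {η : Fin n → ℝ} {t : Fin N} (ht : t ∈ Iset x a η) :
    |a * (⨅ s, nrm (x s)) * nrm η| ≤ |dotR (x t) η| := by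
  have hbdd : BddBelow (Set.range fun s => nrm (x s)) :=
    ⟨0, by rintro _ ⟨s, rfl⟩; exact nrm_nonneg _⟩
  have hinf : 0 ≤ ⨅ s, nrm (x s) := Real.iInf_nonneg fun s => nrm_nonneg _
  rw [abs_of_nonneg (by have := nrm_nonneg η; positivity)]
  calc a * (⨅ s, nrm (x s)) * nrm η ≤ a * nrm (x t) * nrm η := by
        gcongr
        · exact nrm_nonneg η
        · exact ciInf_le hbdd t
    _ ≤ |dotR (x t) η| := (mem_filter.1 ht).2

section Loss

variable {ℓ : ℝ → ℝ}

theorem loss_sub_comm (hP3 : ∀ a b, |a| ≤ |b| → ℓ a ≤ ℓ b) (a b : ℝ) :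
    ℓ (a - b) = ℓ (b - a) :=
  le_antisymm (hP3 _ _ (abs_sub_comm a b).le) (hP3 _ _ (abs_sub_comm b a).le)

theorem loss_le_of_abs_le (hP3 : ∀ a b, |a| ≤ |b| → ℓ a ≤ ℓ b) {u ε : ℝ} (hu : |u| ≤ ε) :
    ℓ u ≤ ℓ ε :=
  hP3 _ _ (hu.trans (le_abs_self ε))

theorem sub_loss_le_loss_sub {αl : ℝ} (hαl : 0 ≤ αl) (hP3 : ∀ a b, |a| ≤ |b| → ℓ a ≤ ℓ b)
    (hP4 : ∀ a b, αl * ℓ a - ℓ b ≤ ℓ (a - b)) {u d ε L : ℝ} (hu : |u| ≤ ε) (hL : L ≤ ℓ d) :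
    αl * L - ℓ ε ≤ ℓ (u - d) := by
  have h := hP4 d u
  rw [loss_sub_comm hP3] at h
  nlinarith [loss_le_of_abs_le hP3 hu]

theorem exp_neg_mul_loss_le_one (hP1 : ∀ a, 0 ≤ ℓ a) {γ : ℝ} (hγ : 0 ≤ γ) (u : ℝ) :
    Real.exp (-(γ * ℓ u)) ≤ 1 :=
  Real.exp_le_one_iff.2 (neg_nonpos.2 (mul_nonneg hγ (hP1 u)))

end Loss

theorem exp_neg_mul_le_inv_mul_exp_neg_mul {γ αl c L u : ℝ} (hγ : 0 ≤ γ) (h : αl * L - c ≤ u) :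
    Real.exp (-(γ * u)) ≤ (Real.exp (-(γ * c)))⁻¹ * Real.exp (-(γ * αl * L)) := by
  rw [← Real.exp_neg, ← Real.exp_add]
  exact Real.exp_le_exp.2 (by nlinarith)

theorem card_mul_le_sum_of_le {ι : Type*} [Fintype ι] {f : ι → ℝ} {I : Finset ι} {m : ℝ}
    (hf : ∀ k, 0 ≤ f k) (hI : ∀ k ∈ I, m ≤ f k) : I.card * m ≤ ∑ k, f k := by
  rw [← nsmul_eq_mul]
  exact (card_nsmul_le_sum I f m hI).trans (sum_le_univ_sum_of_nonneg hf)

theorem sum_le_card_mul_add_card_sub {ι : Type*} [Fintype ι] [DecidableEq ι] {f : ι → ℝ}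
    {S : Finset ι} {B : ℝ} (hS : ∀ k ∈ S, f k ≤ B) (h1 : ∀ k, f k ≤ 1) :
    ∑ k, f k ≤ S.card * B + (Fintype.card ι - S.card) := by
  have hS' := sum_le_card_nsmul S f B hS
  have hSc := sum_le_card_nsmul Sᶜ f 1 fun k _ => h1 k
  rw [nsmul_eq_mul] at hS' hSc
  rw [card_compl, Nat.cast_sub (card_le_univ S)] at hSc
  linarith [sum_add_sum_compl S f]

theorem mul_sub_le_mul_sub_one_of_le {i s N E D : ℝ} (hsi : s ≤ i) (hE0 : 0 < E) (hE1 : E ≤ 1)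
    (h : i * E ≤ s * (E⁻¹ * D) + (N - s)) :
    E * (i * E + i - N) - i ≤ s * (D - 1) := by
  have hE : i * E * E ≤ s * D + (N - s) * E := by
    calc i * E * E ≤ (s * (E⁻¹ * D) + (N - s)) * E := mul_le_mul_of_nonneg_right h hE0.le
      _ = s * D + (N - s) * E := by field_simp
  nlinarith

theorem mce_key_inequality_general {n N : ℕ}
    (x : Fin N → Fin n → ℝ)
    (θo : Fin n → ℝ) (v y : Fin N → ℝ)
    (hy : ∀ t, y t = dotR (x t) θo + v t)
    (ε : ℝ)
    (ℓ : ℝ → ℝ) (αl : ℝ) (hαl : 0 < αl)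
    (hP1 : ∀ a, 0 ≤ ℓ a)
    (hP3 : ∀ a b, |a| ≤ |b| → ℓ a ≤ ℓ b)
    (hP4 : ∀ a b, αl * ℓ a - ℓ b ≤ ℓ (a - b))
    (γ : ℝ) (hγ : 0 < γ) (a : ℝ) (ha : 0 < a)
    (θs : Fin n → ℝ)
    (hmax : ∀ θ : Fin n → ℝ,
      ∑ k, Real.exp (-(γ * ℓ (y k - dotR (x k) θ))) ≤
        ∑ k, Real.exp (-(γ * ℓ (y k - dotR (x k) θs)))) :
    Real.exp (-(γ * ℓ ε)) *
        (((Finset.univ.filter fun t => |v t| ≤ ε).card : ℝ) * Real.exp (-(γ * ℓ ε)) +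
          ((Finset.univ.filter fun t => |v t| ≤ ε).card : ℝ) - (N : ℝ)) -
        ((Finset.univ.filter fun t => |v t| ≤ ε).card : ℝ) ≤
      ((((Finset.univ.filter fun t => |v t| ≤ ε) ∩ Iset x a (θs - θo)).card : ℝ)) *
        (Real.exp (-(γ * αl * ℓ (a * (⨅ t, nrm (x t)) * nrm (θs - θo)))) - 1) := by
  set I := univ.filter fun t => |v t| ≤ ε
  have hres : ∀ t, y t - dotR (x t) θs = v t - dotR (x t) (θs - θo) := fun t => by
    rw [hy, dotR_sub_right]; ring
  have lower : (I.card : ℝ) * Real.exp (-(γ * ℓ ε)) ≤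
      ∑ k, Real.exp (-(γ * ℓ (y k - dotR (x k) θs))) := by
    refine (card_mul_le_sum_of_le (fun k => (Real.exp_pos _).le) fun k hk => ?_).trans (hmax θo)
    rw [hy, add_sub_cancel_left]
    exact Real.exp_le_exp.2 <| neg_le_neg <|
      mul_le_mul_of_nonneg_left (loss_le_of_abs_le hP3 (mem_filter.1 hk).2) hγ.le
  have upper := sum_le_card_mul_add_card_sub (S := I ∩ Iset x a (θs - θo))
    (f := fun k => Real.exp (-(γ * ℓ (y k - dotR (x k) θs))))
    (fun k hk => by
      obtain ⟨hkI, hkA⟩ := mem_inter.1 hk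
      rw [hres]
      exact exp_neg_mul_le_inv_mul_exp_neg_mul hγ.le (sub_loss_le_loss_sub hαl.le hP3 hP4
        (mem_filter.1 hkI).2 (hP3 _ _ (abs_mul_iInf_nrm_mul_le_of_mem_Iset ha.le hkA))))
    (fun k => exp_neg_mul_loss_le_one hP1 hγ.le _)
  rw [Fintype.card_fin] at upper
  exact mul_sub_le_mul_sub_one_of_le (by exact_mod_cast card_le_card inter_subset_left)
    (Real.exp_pos _) (exp_neg_mul_loss_le_one hP1 hγ.le ε) (lower.trans upper)

/-- the key inequality in the proof of the main theorem. -/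
theorem mce_key_inequality {n N : ℕ} (hN : 0 < N)
    (x : Fin N → Fin n → ℝ) (hx : ∀ t, x t ≠ 0)
    (θo : Fin n → ℝ) (v y : Fin N → ℝ)
    (hy : ∀ t, y t = dotR (x t) θo + v t)
    (ε : ℝ) (hε : 0 ≤ ε)
    (ℓ : ℝ → ℝ) (αl : ℝ) (hαl : 0 < αl)
    (hP1 : ∀ a, 0 ≤ ℓ a) (hP1' : ∀ a, ℓ a = 0 ↔ a = 0)
    (hP2 : ∀ a, ℓ (-a) = ℓ a)
    (hP3 : ∀ a b, |a| ≤ |b| → ℓ a ≤ ℓ b)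
    (hP4 : ∀ a b, αl * ℓ a - ℓ b ≤ ℓ (a - b))
    (γ : ℝ) (hγ : 0 < γ) (a : ℝ) (ha : 0 < a) (ha1 : a ≤ 1)
    (θs : Fin n → ℝ)
    (hmax : ∀ θ : Fin n → ℝ,
      ∑ k, Real.exp (-(γ * ℓ (y k - dotR (x k) θ))) ≤
        ∑ k, Real.exp (-(γ * ℓ (y k - dotR (x k) θs)))) :
    Real.exp (-(γ * ℓ ε)) *
        (((Finset.univ.filter fun t => |v t| ≤ ε).card : ℝ) * Real.exp (-(γ * ℓ ε)) +
          ((Finset.univ.filter fun t => |v t| ≤ ε).card : ℝ) - (N : ℝ)) -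
        ((Finset.univ.filter fun t => |v t| ≤ ε).card : ℝ) ≤
      ((((Finset.univ.filter fun t => |v t| ≤ ε) ∩ Iset x a (θs - θo)).card : ℝ)) *
        (Real.exp (-(γ * αl * ℓ (a * (⨅ t, nrm (x t)) * nrm (θs - θo)))) - 1) :=
  mce_key_inequality_general x θo v y hy ε ℓ αl hαl hP1 hP3 hP4 γ hγ a ha θs hmax
end
end

section
/- (No exact recovery for the Gaussian-kernel maximum correntropy estimator) Let x_1,…,x_N ∈ ℝⁿ be nonzero vectors, θ° ∈ ℝⁿ, γ > 0, ε > 0, and let I ⊆ {1,…,N} be a nonempty index set. Then there exists a noise sequence v_1,…,v_N with v_t = 0 for t ∉ I and |v_t| > ε for t ∈ I, such that, setting y_t = x_tᵀθ° + v_t, the vector θ° is NOT a maximizer over ℝⁿ of θ ↦ ∑_{t=1}^N exp(−γ(y_t − x_tᵀθ)²). In particular, one can choose the v_t so that ∑_{t∈I} exp(−γv_t²)·v_t·x_t ≠ 0, which makes the gradient of the objective at θ° nonzero. -/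
/-!
At `θ°` every residual `y_t - x_tᵀθ°` equals the noise `v_t`, so the derivative of the
correntropy along a direction `d` is `2γ ⟪g, d⟫` with `g = ∑_{t ∈ I} exp(-γ v_t²) v_t x_t`.
Taking `d = g` gives `2γ ‖g‖² ≠ 0` as soon as `g ≠ 0`, which rules out a maximum at `θ°`.
Such noise exists: with `|v_t| = 2ε` on `I`, flipping the sign of `v_{t₀}` changes `g` by
`4ε exp(-4γε²) x_{t₀} ≠ 0`, so one of the two choices has `g ≠ 0`.
-/

open scoped BigOperators

noncomputable section

open Real Set

/-- The sample Gaussian correntropy, without the factor `1 / N` of the sample mean. -/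
def correntropy {ι : Type*} [Fintype ι] {n : ℕ} (γ : ℝ) (x : ι → Fin n → ℝ) (y : ι → ℝ)
    (θ : Fin n → ℝ) : ℝ :=
  ∑ t, exp (-(γ * (y t - dotR (x t) θ) ^ 2))

/-- The gradient of `correntropy γ x y` at `θ`, divided by `2γ`. -/
def correntropyGrad {ι : Type*} [Fintype ι] {n : ℕ} (γ : ℝ) (x : ι → Fin n → ℝ) (y : ι → ℝ)
    (θ : Fin n → ℝ) : Fin n → ℝ :=
  ∑ t, (exp (-(γ * (y t - dotR (x t) θ) ^ 2)) * (y t - dotR (x t) θ)) • x t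

theorem dotR_eq_dotProduct {n : ℕ} (u v : Fin n → ℝ) : dotR u v = u ⬝ᵥ v := rfl

theorem hasDerivAt_exp_neg_mul_sq_sub_mul (γ r a s : ℝ) :
    HasDerivAt (fun s : ℝ => exp (-(γ * (r - s * a) ^ 2)))
      (exp (-(γ * (r - s * a) ^ 2)) * (2 * γ * (r - s * a) * a)) s := by
  have h : HasDerivAt (fun s => r - s * a) (-a) s := by
    simpa using ((hasDerivAt_id s).mul_const a).const_sub r
  convert ((h.fun_pow 2).const_mul γ).fun_neg.exp using 1
  push_cast
  ring

section Correntropy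

variable {ι : Type*} [Fintype ι] {n : ℕ} (γ : ℝ) (x : ι → Fin n → ℝ) (y : ι → ℝ)

theorem hasDerivAt_correntropy_add_smul (θ d : Fin n → ℝ) :
    HasDerivAt (fun s : ℝ => correntropy γ x y (θ + s • d))
      (2 * γ * (correntropyGrad γ x y θ ⬝ᵥ d)) 0 := by
  have hline : (fun s : ℝ => correntropy γ x y (θ + s • d)) =
      fun s => ∑ t, exp (-(γ * ((y t - dotR (x t) θ) - s * dotR (x t) d) ^ 2)) := by
    funext s
    simp only [correntropy, dotR_eq_dotProduct, dotProduct_add, dotProduct_smul, smul_eq_mul,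
      sub_add_eq_sub_sub, mul_comm s]
  rw [hline]
  refine (HasDerivAt.fun_sum fun t _ =>
    hasDerivAt_exp_neg_mul_sq_sub_mul γ (y t - dotR (x t) θ) (dotR (x t) d) 0).congr_deriv ?_
  simp only [correntropyGrad, sum_dotProduct, smul_dotProduct, smul_eq_mul, Finset.mul_sum,
    dotR_eq_dotProduct, zero_mul, sub_zero]
  exact Finset.sum_congr rfl fun t _ => by ring

variable {γ}

theorem correntropyGrad_eq_zero_of_isMaxOn (hγ : γ ≠ 0) {θ : Fin n → ℝ}
    (hmax : IsMaxOn (correntropy γ x y) univ θ) : correntropyGrad γ x y θ = 0 := by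
  have hline : IsLocalMax
      (fun s : ℝ => correntropy γ x y (θ + s • correntropyGrad γ x y θ)) 0 := by
    refine IsMaxOn.isLocalMax (s := univ) (fun s _ => ?_) Filter.univ_mem
    simpa using hmax (mem_univ (θ + s • correntropyGrad γ x y θ))
  have h := hline.hasDerivAt_eq_zero (hasDerivAt_correntropy_add_smul γ x y θ _)
  simpa [hγ, dotProduct_self_eq_zero] using h

end Correntropy

theorem exists_sign_mul_smul_add_ne_zero {K E : Type*} [Field K] [CharZero K] [AddCommGroup E]
    [Module K E] {a : K} {u : E} (ha : a ≠ 0) (hu : u ≠ 0) (w : E) :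
    ∃ σ ∈ ({1, -1} : Set K), (σ * a) • u + w ≠ 0 := by
  by_contra! h
  have h2 : (2 * a) • u = 0 :=
    calc (2 * a) • u = ((1 * a) • u + w) - ((-1 * a) • u + w) := by module
      _ = 0 := by rw [h 1 (by simp), h (-1) (by simp), sub_zero]
  simp_all

theorem exists_noise_sum_ne_zero {ι E : Type*} [DecidableEq ι] [AddCommGroup E] [Module ℝ E]
    (x : ι → E) (γ : ℝ) {c : ℝ} (hc : c ≠ 0) {I : Finset ι} {t₀ : ι} (ht₀ : t₀ ∈ I)
    (hx : x t₀ ≠ 0) :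
    ∃ v : ι → ℝ, (∀ t ∉ I, v t = 0) ∧ (∀ t ∈ I, |v t| = |c|) ∧
      ∑ t ∈ I, (exp (-(γ * v t ^ 2)) * v t) • x t ≠ 0 := by
  obtain ⟨σ, hσ, hne⟩ := exists_sign_mul_smul_add_ne_zero
    (mul_ne_zero (exp_pos (-(γ * c ^ 2))).ne' hc) hx
    (∑ t ∈ I.erase t₀, (exp (-(γ * c ^ 2)) * c) • x t)
  obtain ⟨hσ_abs, hσ_sq⟩ : |σ| = 1 ∧ σ ^ 2 = 1 := by rcases hσ with rfl | rfl <;> norm_num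
  refine ⟨fun t => if t ∈ I then (if t = t₀ then σ * c else c) else 0, fun t ht => if_neg ht,
    fun t ht => ?_, ?_⟩
  · simp only [ht, if_true]
    split_ifs <;> simp [abs_mul, hσ_abs]
  · rw [← Finset.add_sum_erase _ _ ht₀]
    convert hne using 2
    · simp only [ht₀, if_true, mul_pow, hσ_sq, one_mul]
      rw [mul_left_comm]
    · refine Finset.sum_congr rfl fun t ht => ?_
      rw [Finset.mem_erase] at ht
      simp [ht.1, ht.2]

/-- no exact recovery for the Gaussian-kernel maximum correntropy
estimator: for any nonzero regressors, any nonempty outlier index set `I`, any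
`γ > 0` and any `ε > 0`, there is a noise sequence vanishing off `I`, of
magnitude `> ε` on `I`, making the (weighted) gradient sum nonzero, such that
`θ°` is not a maximizer of the sample Gaussian correntropy. -/
theorem mce_gaussian_no_exact_recovery {n N : ℕ}
    (x : Fin N → Fin n → ℝ) (hx : ∀ t, x t ≠ 0)
    (θo : Fin n → ℝ) (γ : ℝ) (hγ : 0 < γ) (ε : ℝ) (hε : 0 < ε)
    (I : Finset (Fin N)) (hI : I.Nonempty) :
    ∃ v : Fin N → ℝ,
      (∀ t ∉ I, v t = 0) ∧
      (∀ t ∈ I, ε < |v t|) ∧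
      (∑ t ∈ I, (Real.exp (-(γ * v t ^ 2)) * v t) • x t) ≠ 0 ∧
      ¬ (∀ θ : Fin n → ℝ,
          ∑ t, Real.exp (-(γ * ((dotR (x t) θo + v t) - dotR (x t) θ) ^ 2)) ≤
            ∑ t, Real.exp (-(γ * ((dotR (x t) θo + v t) - dotR (x t) θo) ^ 2))) := by
  obtain ⟨t₀, ht₀⟩ := hI
  obtain ⟨v, hv₀, hvI, hgrad⟩ :=
    exists_noise_sum_ne_zero x γ (by positivity : 2 * ε ≠ 0) ht₀ (hx t₀)
  refine ⟨v, hv₀, fun t ht => by rw [hvI t ht, abs_of_pos (by positivity)]; linarith, hgrad,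
    fun hmax => hgrad ?_⟩
  have hcrit := correntropyGrad_eq_zero_of_isMaxOn x (fun t => dotR (x t) θo + v t) hγ.ne'
    (isMaxOn_univ_iff.2 hmax)
  rw [← hcrit, correntropyGrad, ← Finset.sum_subset (Finset.subset_univ I)]
  · simp
  · intro t _ ht
    simp [hv₀ t ht]
end
end
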